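/- (Theorem 2.) In the composed transition system with wildcard receives, define ample(s) = {B} if B ∈ enabled(s); else ample(s) = {SR} if some non-wildcard SR is enabled and SR ranks first in enabled(s); else ample(s) = enabled(s). Let G̃* be the subgraph keeping from each state only transitions labeled by actions in ample(s). Then for every execution in the full graph G from initial state σ₀ to a deadlocked state σ of length n, there is an execution from σ₀ to σ of length n in G̃*, and conversely. -/

import Mathlib

/-- Local actions of an MPI process: send to a specific destination, receive
from a specific source, wildcard receive (from any source), or barrier. -/
inductive WAct (n : ℕ) where
  | send (dest : Fin n)
  | recv (src : Fin n)
  | recvAny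
  | barrier
deriving DecidableEq

/-- Global actions of the parallel composition with wildcard receives:
`B` (global barrier), `SR i j` (send from `i` matched with the specific
receive at `j`), and `SRW i j` (send from `i` matched with the wildcard
receive at `j`). -/
inductive WGAct (n : ℕ) where
  | B
  | SR (i j : Fin n)
  | SRW (i j : Fin n)
deriving DecidableEq

variable {n : ℕ} {L : Fin n → Type}

/-- Enabledness of global actions in a global state `σ` (an `n`-tuple of local
states), where `next i` gives the unique next local action of deterministic
process `i` (`none` = terminated). -/
def WEnabled (next : ∀ i, L i → Option (WAct n)) (σ : ∀ i, L i) : WGAct n → Prop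
  | .B => ∀ i, next i (σ i) = some .barrier
  | .SR i j => i ≠ j ∧ next i (σ i) = some (.send j) ∧ next j (σ j) = some (.recv i)
  | .SRW i j => i ≠ j ∧ next i (σ i) = some (.send j) ∧ next j (σ j) = some .recvAny

open scoped Classical in
/-- The global step function: `B` advances all components, while `SR i j` and
`SRW i j` advance exactly components `i` and `j`. -/
noncomputable def wstep (next : ∀ i, L i → Option (WAct n)) (adv : ∀ i, L i → L i) :
    WGAct n → (∀ i, L i) → Option (∀ i, L i)
  | .B, σ => if WEnabled next σ .B then some (fun k => adv k (σ k)) else none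
  | .SR i j, σ =>
      if WEnabled next σ (.SR i j) then
        some (Function.update (Function.update σ i (adv i (σ i))) j (adv j (σ j)))
      else none
  | .SRW i j, σ =>
      if WEnabled next σ (.SRW i j) then
        some (Function.update (Function.update σ i (adv i (σ i))) j (adv j (σ j)))
      else none

/-- The weight of a global action: `B` ranks first, and an `SR`/`SRW` action
is weighted by the smaller index of the two processes it advances. -/
def wweight : WGAct n → ℕ
  | .B => 1
  | .SR i j => 2 + min i.val j.val
  | .SRW i j => 2 + min i.val j.val

open scoped Classical in
/-- The ample set of the on-the-fly schedule with lazy matching: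
`{B}` if `B` is enabled; otherwise the (unique) enabled non-wildcard `SR`
action that ranks first in `enabled(σ)`, if such an `SR` exists; otherwise all
enabled actions. -/
noncomputable def ample (next : ∀ i, L i → Option (WAct n)) (σ : ∀ i, L i) :
    Set (WGAct n) :=
  if WEnabled next σ .B then {.B}
  else if (∃ i j : Fin n, WEnabled next σ (.SR i j) ∧
            ∀ g : WGAct n, WEnabled next σ g → wweight (.SR i j) ≤ wweight g) then
    {g : WGAct n | ∃ i j : Fin n, g = .SR i j ∧ WEnabled next σ (.SR i j) ∧
      ∀ g' : WGAct n, WEnabled next σ g' → wweight (.SR i j) ≤ wweight g'}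
  else {g : WGAct n | WEnabled next σ g}

/-- Executions in the full state graph `G`. -/
inductive WRun (next : ∀ i, L i → Option (WAct n)) (adv : ∀ i, L i → L i) :
    List (WGAct n) → (∀ i, L i) → (∀ i, L i) → Prop
  | nil (σ : ∀ i, L i) : WRun next adv [] σ σ
  | cons {g : WGAct n} {l : List (WGAct n)} {σ σ' τ : ∀ i, L i} :
      wstep next adv g σ = some σ' → WRun next adv l σ' τ → WRun next adv (g :: l) σ τ

/-- Executions in the reduced graph `G̃*`, keeping from each state only the
transitions labeled by actions of its ample set. -/
inductive ARun (next : ∀ i, L i → Option (WAct n)) (adv : ∀ i, L i → L i) :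
    List (WGAct n) → (∀ i, L i) → (∀ i, L i) → Prop
  | nil (σ : ∀ i, L i) : ARun next adv [] σ σ
  | cons {g : WGAct n} {l : List (WGAct n)} {σ σ' τ : ∀ i, L i} :
      g ∈ ample next σ → wstep next adv g σ = some σ' →
      ARun next adv l σ' τ → ARun next adv (g :: l) σ τ

/-- A deadlocked global state: no global action is enabled, but at least one
process has not terminated. -/
def WDeadlocked (next : ∀ i, L i → Option (WAct n)) (σ : ∀ i, L i) : Prop :=
  (∀ g : WGAct n, ¬ WEnabled next σ g) ∧ ∃ i : Fin n, (next i (σ i)).isSome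

/-!
If `B` is enabled it is the only enabled action, so every run already starts with it. Otherwise,
an enabled non-wildcard `SR a b` shares no process with any other enabled action, so no step can
disable it and it commutes with every step preceding it. A run ending in a deadlock must
therefore contain `SR a b`, and moving its first occurrence to the front gives a run of the same
length that starts with the ample action. Induction on the length finishes the argument.
-/

namespace WGAct

def IsPair (g : WGAct n) (i j : Fin n) : Prop :=
  g = SR i j ∨ g = SRW i j

lemma isPair_SR (i j : Fin n) : (SR i j).IsPair i j :=
  Or.inl rfl

end WGAct

noncomputable def pairUpdate (adv : ∀ i, L i → L i) (σ : ∀ i, L i) (i j : Fin n) : ∀ k, L k :=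
  Function.update (Function.update σ i (adv i (σ i))) j (adv j (σ j))

section Runs

variable {next : ∀ i, L i → Option (WAct n)} {adv : ∀ i, L i → L i}

lemma pairUpdate_apply (σ : ∀ i, L i) (i j k : Fin n) :
    pairUpdate adv σ i j k = if k = i ∨ k = j then adv k (σ k) else σ k := by
  by_cases hkj : k = j
  · subst hkj
    simp [pairUpdate]
  · by_cases hki : k = i
    · subst hki
      simp [pairUpdate, Function.update_of_ne hkj]
    · simp [pairUpdate, hki, hkj]

lemma pairUpdate_apply_of_ne (σ : ∀ i, L i) {i j k : Fin n} (hki : k ≠ i) (hkj : k ≠ j) :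
    pairUpdate adv σ i j k = σ k := by
  simp [pairUpdate_apply, hki, hkj]

lemma pairUpdate_comm (σ : ∀ i, L i) {a b i j : Fin n}
    (hia : i ≠ a) (hib : i ≠ b) (hja : j ≠ a) (hjb : j ≠ b) :
    pairUpdate adv (pairUpdate adv σ a b) i j = pairUpdate adv (pairUpdate adv σ i j) a b := by
  funext k
  by_cases hk : k = i ∨ k = j
  · have hk' : ¬(k = a ∨ k = b) := by
      rcases hk with rfl | rfl
      · simp [hia, hib]
      · simp [hja, hjb]
    simp [pairUpdate_apply, hk, hk']
  · simp [pairUpdate_apply, hk]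

lemma WEnabled.of_wstep_eq_some {g : WGAct n} {σ σ' : ∀ i, L i}
    (h : wstep next adv g σ = some σ') : WEnabled next σ g := by
  cases g <;> simp only [wstep] at h <;> split_ifs at h <;> assumption

lemma WGAct.IsPair.wstep_eq_some_iff {g : WGAct n} {i j : Fin n} (hg : g.IsPair i j)
    {σ σ' : ∀ i, L i} :
    wstep next adv g σ = some σ' ↔ WEnabled next σ g ∧ pairUpdate adv σ i j = σ' := by
  rcases hg with rfl | rfl <;> simp [wstep, pairUpdate]

lemma WGAct.IsPair.wEnabled_congr {g : WGAct n} {i j : Fin n} (hg : g.IsPair i j)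
    {σ σ' : ∀ i, L i} (hi : σ' i = σ i) (hj : σ' j = σ j) :
    WEnabled next σ' g ↔ WEnabled next σ g := by
  rcases hg with rfl | rfl <;> simp [WEnabled, hi, hj]

lemma WEnabled.eq_B_of_B {σ : ∀ i, L i} {g : WGAct n} (hB : WEnabled next σ .B)
    (hg : WEnabled next σ g) : g = .B := by
  cases g with
  | B => rfl
  | SR i j => simp [WEnabled, hB i] at hg
  | SRW i j => simp [WEnabled, hB i] at hg

lemma WEnabled.exists_isPair_disjoint_of_SR {σ : ∀ i, L i} {a b : Fin n}
    (hab : WEnabled next σ (.SR a b)) {g : WGAct n} (hg : WEnabled next σ g)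
    (hne : g ≠ .SR a b) :
    ∃ i j, g.IsPair i j ∧ i ≠ a ∧ i ≠ b ∧ j ≠ a ∧ j ≠ b := by
  obtain ⟨-, ha, hb⟩ := hab
  cases g with
  | B => simpa [ha] using hg a
  | SR i j =>
    obtain ⟨-, hi, hj⟩ := hg
    refine ⟨i, j, .inl rfl, ?_, ?_, ?_, ?_⟩ <;> rintro rfl <;> simp_all
  | SRW i j =>
    obtain ⟨-, hi, hj⟩ := hg
    refine ⟨i, j, .inr rfl, ?_, ?_, ?_, ?_⟩ <;> rintro rfl <;> grind

lemma wEnabled_SR_iff_of_wstep {g : WGAct n} {σ σ' : ∀ i, L i} {a b i j : Fin n}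
    (hg : g.IsPair i j) (hia : i ≠ a) (hib : i ≠ b) (hja : j ≠ a) (hjb : j ≠ b)
    (hstep : wstep next adv g σ = some σ') :
    WEnabled next σ' (.SR a b) ↔ WEnabled next σ (.SR a b) := by
  obtain ⟨-, rfl⟩ := hg.wstep_eq_some_iff.1 hstep
  exact (WGAct.isPair_SR a b).wEnabled_congr (pairUpdate_apply_of_ne _ hia.symm hja.symm)
    (pairUpdate_apply_of_ne _ hib.symm hjb.symm)

lemma wstep_SR_comm {g : WGAct n} {σ σ₁ σ₂ : ∀ i, L i} {a b i j : Fin n}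
    (hg : g.IsPair i j) (hia : i ≠ a) (hib : i ≠ b) (hja : j ≠ a) (hjb : j ≠ b)
    (hstep₁ : wstep next adv g σ = some σ₁) (hstep₂ : wstep next adv (.SR a b) σ₁ = some σ₂) :
    ∃ σ₁', wstep next adv (.SR a b) σ = some σ₁' ∧ wstep next adv g σ₁' = some σ₂ := by
  have hab := (wEnabled_SR_iff_of_wstep hg hia hib hja hjb hstep₁).1
    (.of_wstep_eq_some hstep₂)
  obtain ⟨hgσ, rfl⟩ := hg.wstep_eq_some_iff.1 hstep₁
  obtain ⟨-, rfl⟩ := (WGAct.isPair_SR a b).wstep_eq_some_iff.1 hstep₂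
  have hgσ' : WEnabled next (pairUpdate adv σ a b) g :=
    (hg.wEnabled_congr (pairUpdate_apply_of_ne _ hia hib)
      (pairUpdate_apply_of_ne _ hja hjb)).2 hgσ
  exact ⟨_, (WGAct.isPair_SR a b).wstep_eq_some_iff.2 ⟨hab, rfl⟩,
    hg.wstep_eq_some_iff.2 ⟨hgσ', pairUpdate_comm σ hia hib hja hjb⟩⟩

lemma WRun.exists_cons_SR {a b : Fin n} {l : List (WGAct n)} {σ σ' : ∀ i, L i}
    (hrun : WRun next adv l σ σ') (hen : WEnabled next σ (.SR a b))
    (hen' : ¬ WEnabled next σ' (.SR a b)) :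
    ∃ l', l'.length + 1 = l.length ∧ WRun next adv (.SR a b :: l') σ σ' := by
  induction hrun with
  | nil => exact absurd hen hen'
  | @cons g l σ σ₁ σ' hstep hrun ih =>
    by_cases hg : g = .SR a b
    · exact ⟨l, rfl, hg ▸ .cons hstep hrun⟩
    obtain ⟨i, j, hij, hia, hib, hja, hjb⟩ :=
      hen.exists_isPair_disjoint_of_SR (.of_wstep_eq_some hstep) hg
    obtain ⟨l', hlen, hrun'⟩ :=
      ih ((wEnabled_SR_iff_of_wstep hij hia hib hja hjb hstep).2 hen) hen'
    obtain _ | ⟨hstepSR, hrunSR⟩ := hrun'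
    obtain ⟨σ₁', hstepSR', hstep'⟩ := wstep_SR_comm hij hia hib hja hjb hstep hstepSR
    exact ⟨g :: l', by simp [← hlen], .cons hstepSR' (.cons hstep' hrunSR)⟩

lemma WRun.exists_ample_cons {g : WGAct n} {l : List (WGAct n)} {σ₀ σ : ∀ i, L i}
    (hdead : ∀ g, ¬ WEnabled next σ g) (hrun : WRun next adv (g :: l) σ₀ σ) :
    ∃ g' σ₁ l', g' ∈ ample next σ₀ ∧ wstep next adv g' σ₀ = some σ₁ ∧
      l'.length = l.length ∧ WRun next adv l' σ₁ σ := by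
  rcases hrun with _ | ⟨hstep, hrun'⟩
  by_cases hB : WEnabled next σ₀ .B
  · obtain rfl := hB.eq_B_of_B (.of_wstep_eq_some hstep)
    refine ⟨.B, _, l, ?_, hstep, rfl, hrun'⟩
    rw [ample, if_pos hB, Set.mem_singleton_iff]
  by_cases hmin : ∃ a b : Fin n, WEnabled next σ₀ (.SR a b) ∧
      ∀ g : WGAct n, WEnabled next σ₀ g → wweight (.SR a b) ≤ wweight g
  · obtain ⟨a, b, hen, hle⟩ := hmin
    obtain ⟨l', hlen, hrunSR⟩ := (WRun.cons hstep hrun').exists_cons_SR hen (hdead _)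
    obtain _ | ⟨hstepSR, hrunSR'⟩ := hrunSR
    refine ⟨.SR a b, _, l', ?_, hstepSR, by simpa using hlen, hrunSR'⟩
    rw [ample, if_neg hB, if_pos ⟨a, b, hen, hle⟩]
    exact ⟨a, b, rfl, hen, hle⟩
  · refine ⟨g, _, l, ?_, hstep, rfl, hrun'⟩
    rw [ample, if_neg hB, if_neg hmin]
    exact .of_wstep_eq_some hstep

theorem WRun.exists_aRun {l : List (WGAct n)} {σ₀ σ : ∀ i, L i}
    (hdead : ∀ g, ¬ WEnabled next σ g) (hrun : WRun next adv l σ₀ σ) :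
    ∃ l', l'.length = l.length ∧ ARun next adv l' σ₀ σ := by
  match l, hrun with
  | [], .nil _ => exact ⟨[], rfl, .nil _⟩
  | g :: l, hrun =>
    obtain ⟨g', σ₁, l', hamp, hstep, hlen, hrun'⟩ := hrun.exists_ample_cons hdead
    obtain ⟨l'', hlen', harun⟩ := hrun'.exists_aRun hdead
    exact ⟨g' :: l'', by simp [hlen', hlen], .cons hamp hstep harun⟩
termination_by l.length

theorem ARun.wRun {l : List (WGAct n)} {σ₀ σ : ∀ i, L i} (h : ARun next adv l σ₀ σ) :
    WRun next adv l σ₀ σ := by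
  induction h with
  | nil σ => exact .nil σ
  | cons _ hstep _ ih => exact .cons hstep ih

end Runs

theorem stmt15_general (next : ∀ i, L i → Option (WAct n)) (adv : ∀ i, L i → L i)
    (σ0 σ : ∀ i, L i) (hdead : WDeadlocked next σ) (l : List (WGAct n)) :
    (WRun next adv l σ0 σ →
      ∃ l' : List (WGAct n), l'.length = l.length ∧ ARun next adv l' σ0 σ) ∧
    (ARun next adv l σ0 σ → WRun next adv l σ0 σ) :=
  ⟨WRun.exists_aRun hdead.1, ARun.wRun⟩

/-- Theorem 2: in the composed transition system with wildcard
receives (with an acyclic state graph), for every execution in the full graph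
from `σ₀` to a deadlocked state `σ` of length `n` there is an execution of
length `n` from `σ₀` to `σ` in the reduced graph `G̃*` defined by the ample
sets, and conversely every reduced execution is an execution of the full
graph. -/
theorem stmt15 (next : ∀ i, L i → Option (WAct n)) (adv : ∀ i, L i → L i)
    (hacyc : ∀ (σ : ∀ i, L i) (l : List (WGAct n)), l ≠ [] →
      WRun next adv l σ σ → False)
    (σ0 σ : ∀ i, L i) (hdead : WDeadlocked next σ) (l : List (WGAct n)) :
    (WRun next adv l σ0 σ →
      ∃ l' : List (WGAct n), l'.length = l.length ∧ ARun next adv l' σ0 σ) ∧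
    (ARun next adv l σ0 σ → WRun next adv l σ0 σ) :=
  stmt15_general next adv σ0 σ hdead l
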